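/- Let γ and η be adjacent vertices of Γ. Then |α(γ,η)| < 1, unless d̂_γ = 0 and η is the only vertex adjacent to γ, in which case α(γ,η) = −1. -/

import Mathlib

open Matrix Finset

namespace ProxSetting

variable {N : ℕ}

/-- The combinatorial axioms for a proximity matrix. -/
def IsProximityMatrix (P : Matrix (Fin N) (Fin N) ℤ) : Prop :=
  (∀ μ, P μ μ = 1) ∧
  (∀ μ ν : Fin N, μ < ν → P μ ν = 0) ∧
  (∀ μ ν : Fin N, ν < μ → P μ ν = 0 ∨ P μ ν = -1) ∧
  (∀ μ : Fin N, (∃ ρ, ρ < μ) →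
      (Finset.univ.filter fun ν => ν < μ ∧ P μ ν = -1).Nonempty ∧
      (Finset.univ.filter fun ν => ν < μ ∧ P μ ν = -1).card ≤ 2) ∧
  (∀ μ ν ρ : Fin N, ν < ρ → P μ ν = -1 → P μ ρ = -1 → P ρ ν = -1) ∧
  (∀ ν ρ μ₁ μ₂ : Fin N, ν < ρ →
      P μ₁ ν = -1 → P μ₁ ρ = -1 → P μ₂ ν = -1 → P μ₂ ρ = -1 → μ₁ = μ₂)

/-- `w(ν) = (PᵀP)_{νν}`. -/
def wght (P : Matrix (Fin N) (Fin N) ℤ) (ν : Fin N) : ℤ := (Pᵀ * P) ν ν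

/-- The dual graph: distinct `μ, ν` are adjacent iff `(PᵀP)_{μν} = -1`. -/
def graph (P : Matrix (Fin N) (Fin N) ℤ) : SimpleGraph (Fin N) where
  Adj μ ν := μ ≠ ν ∧ (Pᵀ * P) μ ν = -1
  symm := by
    constructor
    intro μ ν h
    refine ⟨h.1.symm, ?_⟩
    have : (Pᵀ * P) ν μ = (Pᵀ * P) μ ν := by
      simp only [Matrix.mul_apply, Matrix.transpose_apply]
      exact Finset.sum_congr rfl fun x _ => mul_comm _ _
    rw [this]; exact h.2
  loopless := ⟨fun μ h => h.1 rfl⟩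

instance (P : Matrix (Fin N) (Fin N) ℤ) : DecidableRel (graph P).Adj :=
  fun μ ν => inferInstanceAs (Decidable (μ ≠ ν ∧ (Pᵀ * P) μ ν = -1))

/-- `d* = d̂·Q` where `Q = P⁻¹`. -/
noncomputable def dstar (P : Matrix (Fin N) (Fin N) ℤ) (dh : Fin N → ℤ) (ν : Fin N) : ℤ :=
  ∑ μ, dh μ * P⁻¹ μ ν

/-- `d = d̂·Q·Qᵀ`. -/
noncomputable def dd (P : Matrix (Fin N) (Fin N) ℤ) (dh : Fin N → ℤ) (ν : Fin N) : ℤ :=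
  ∑ ρ, dstar P dh ρ * P⁻¹ ν ρ

/-- `k_ν = Σ_μ q_{νμ}`. -/
noncomputable def kk (P : Matrix (Fin N) (Fin N) ℤ) (ν : Fin N) : ℤ :=
  ∑ μ, P⁻¹ ν μ

/-- `λ(a,ν) = (a + k_ν + 1)/d_ν`. -/
noncomputable def lam (P : Matrix (Fin N) (Fin N) ℤ) (dh : Fin N → ℤ) (a : ℤ) (ν : Fin N) :
    ℚ :=
  ((a : ℚ) + (kk P ν : ℚ) + 1) / (dd P dh ν : ℚ)

/-- A vector is antinef if every entry of `f·Pᵀ·P` is nonnegative. -/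
def Antinef (P : Matrix (Fin N) (Fin N) ℤ) (f : Fin N → ℤ) : Prop :=
  ∀ ν, 0 ≤ ∑ μ, f μ * (Pᵀ * P) μ ν

/-- `ξ_f = min_ν λ(f_ν, ν)`. -/
noncomputable def xiF [NeZero N] (P : Matrix (Fin N) (Fin N) ℤ) (dh : Fin N → ℤ)
    (f : Fin N → ℤ) : ℚ :=
  Finset.univ.inf'
    (Finset.univ_nonempty_iff.mpr ⟨⟨0, Nat.pos_of_ne_zero (NeZero.ne N)⟩⟩)
    fun ν => lam P dh (f ν) ν

/-- graph distance from a vertex to a set of vertices. -/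
noncomputable def distSet (P : Matrix (Fin N) (Fin N) ℤ) (ν : Fin N) (S : Finset (Fin N)) :
    ℕ :=
  sInf {n | ∃ μ ∈ S, (graph P).dist ν μ = n}

/-- `α(γ,ν) = k_ν + 1 − d_ν·(k_γ+1)/d_γ`. -/
noncomputable def alpha (P : Matrix (Fin N) (Fin N) ℤ) (dh : Fin N → ℤ) (γ ν : Fin N) : ℚ :=
  (kk P ν : ℚ) + 1 - (dd P dh ν : ℚ) * ((kk P γ : ℚ) + 1) / (dd P dh γ : ℚ)

end ProxSetting

open ProxSetting Matrix Finset

set_option linter.unusedSectionVars false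
set_option linter.unusedVariables false

namespace ProxAux
open ProxSetting

lemma finStrong {N : ℕ} {C : Fin N → Prop}
    (h : ∀ μ : Fin N, (∀ s, s < μ → C s) → C μ) : ∀ μ, C μ := by
  have main : ∀ k : ℕ, ∀ μ : Fin N, μ.val < k → C μ := by
    intro k
    induction k with
    | zero => intro μ hμ; omega
    | succ k ih =>
      intro μ hμ
      exact h μ (fun s hs => ih s (by have := (Fin.lt_def.mp hs); omega))
  intro μ; exact main (μ.val + 1) μ (by omega)

/-- the Green matrix `Q Qᵀ`. -/
noncomputable def gm {N : ℕ} (P : Matrix (Fin N) (Fin N) ℤ) (μ ν : Fin N) : ℤ :=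
  ∑ ρ, P⁻¹ μ ρ * P⁻¹ ν ρ

/-- the set of points `μ` is proximate to. -/
def proxS {N : ℕ} (P : Matrix (Fin N) (Fin N) ℤ) (μ : Fin N) : Finset (Fin N) :=
  Finset.univ.filter fun s => P μ s = -1

section Basic
variable {N : ℕ} {P : Matrix (Fin N) (Fin N) ℤ} (hP : IsProximityMatrix P)
include hP

lemma prox_lt {μ s : Fin N} (h : P μ s = -1) : s < μ := by
  rcases lt_trichotomy s μ with h' | h' | h'
  · exact h'
  · subst h'; rw [hP.1] at h; omega
  · rw [hP.2.1 μ s h'] at h; omega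

lemma prox_mem {μ s : Fin N} (h : s ∈ proxS P μ) : P μ s = -1 := by
  simpa [proxS] using h

lemma mem_prox {μ s : Fin N} (h : P μ s = -1) : s ∈ proxS P μ := by
  simpa [proxS] using h

lemma Pcases {μ s : Fin N} : P μ s = 1 ∧ s = μ ∨ P μ s = -1 ∨ P μ s = 0 := by
  rcases lt_trichotomy s μ with h' | h' | h'
  · rcases hP.2.2.1 μ s h' with h | h
    · right; right; exact h
    · right; left; exact h
  · subst h'; left; exact ⟨hP.1 _, rfl⟩
  · right; right; exact hP.2.1 μ s h'

lemma hdet : P.det = 1 := by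
  have hbt : P.BlockTriangular ⇑OrderDual.toDual := by
    intro i j hij
    exact hP.2.1 i j hij
  rw [Matrix.det_of_lowerTriangular P hbt]
  simp [hP.1]

lemma hunit : IsUnit P.det := by rw [hdet hP]; exact isUnit_one

lemma hPQ : P * P⁻¹ = 1 := Matrix.mul_nonsing_inv P (hunit hP)

lemma hQP : P⁻¹ * P = 1 := Matrix.nonsing_inv_mul P (hunit hP)

lemma Qrec (μ ν : Fin N) :
    P⁻¹ μ ν = (if μ = ν then (1:ℤ) else 0) + ∑ s ∈ proxS P μ, P⁻¹ s ν := by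
  have h := congrFun (congrFun (hPQ hP) μ) ν
  rw [Matrix.mul_apply, Matrix.one_apply] at h
  have hsplit : ∀ s : Fin N, P μ s * P⁻¹ s ν =
      (if s = μ then P⁻¹ μ ν else 0) + (if P μ s = -1 then -(P⁻¹ s ν) else 0) := by
    intro s
    rcases Pcases hP (μ := μ) (s := s) with ⟨h1, h2⟩ | h1 | h1
    · subst h2; rw [h1]; simp
    · have hne : s ≠ μ := fun hc => by subst hc; rw [hP.1] at h1; omega
      rw [h1]; simp [hne]
    · have hne : s ≠ μ := fun hc => by subst hc; rw [hP.1] at h1; omega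
      rw [h1]; simp [hne, h1]
  rw [Finset.sum_congr rfl (fun s _ => hsplit s), Finset.sum_add_distrib,
    Finset.sum_ite_eq' Finset.univ μ (fun _ => P⁻¹ μ ν)] at h
  simp only [Finset.mem_univ, if_true] at h
  have h2 : ∑ s : Fin N, (if P μ s = -1 then -(P⁻¹ s ν) else 0)
      = -∑ s ∈ proxS P μ, P⁻¹ s ν := by
    rw [proxS, Finset.sum_filter, ← Finset.sum_neg_distrib]
    exact Finset.sum_congr rfl fun s _ => by split <;> simp
  rw [h2] at h
  linear_combination h


lemma Qlt {ν : Fin N} : ∀ μ, μ < ν → P⁻¹ μ ν = 0 := by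
  refine finStrong (fun μ ih h => ?_)
  rw [Qrec hP]
  have h1 : (if μ = ν then (1:ℤ) else 0) = 0 := by simp [Fin.ne_of_lt h]
  rw [h1, Finset.sum_eq_zero, add_zero]
  intro s hs
  have hslt := prox_lt hP (prox_mem hP hs)
  exact ih s hslt (lt_trans hslt h)

lemma Qdiag (μ : Fin N) : P⁻¹ μ μ = 1 := by
  rw [Qrec hP]
  rw [Finset.sum_eq_zero, if_pos rfl, add_zero]
  intro s hs
  exact Qlt hP s (prox_lt hP (prox_mem hP hs))

lemma Qnonneg : ∀ μ ν : Fin N, 0 ≤ P⁻¹ μ ν := by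
  have : ∀ μ : Fin N, ∀ ν, 0 ≤ P⁻¹ μ ν := by
    refine finStrong (fun μ ih ν => ?_)
    rw [Qrec hP]
    have h2 : 0 ≤ ∑ s ∈ proxS P μ, P⁻¹ s ν :=
      Finset.sum_nonneg fun s hs => ih s (prox_lt hP (prox_mem hP hs)) ν
    positivity
  exact this

lemma Qpos0 (hN : 0 < N) : ∀ μ : Fin N, 1 ≤ P⁻¹ μ ⟨0, hN⟩ := by
  refine finStrong (fun μ ih => ?_)
  by_cases hμ : μ = ⟨0, hN⟩
  · subst hμ; rw [Qdiag hP]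
  · have hpos : (⟨0, hN⟩ : Fin N) < μ := by
      rcases Fin.lt_or_lt_of_ne hμ with h | h
      · exfalso; have := Fin.lt_def.mp h; simp at this
      · exact h
    obtain ⟨⟨s, hsmem⟩, -⟩ := hP.2.2.2.1 μ ⟨⟨0, hN⟩, hpos⟩
    simp only [Finset.mem_filter, Finset.mem_univ, true_and] at hsmem
    have hsp : s ∈ proxS P μ := mem_prox hP hsmem.2
    calc (1:ℤ) ≤ P⁻¹ s ⟨0, hN⟩ := ih s hsmem.1
    _ ≤ ∑ t ∈ proxS P μ, P⁻¹ t ⟨0, hN⟩ :=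
        Finset.single_le_sum (fun t _ => Qnonneg hP t _) hsp
    _ ≤ _ := by rw [Qrec hP]; simp [hμ]

lemma gm_symm (μ ν : Fin N) : gm P μ ν = gm P ν μ :=
  Finset.sum_congr rfl fun ρ _ => mul_comm _ _

lemma gm_pos (μ ν : Fin N) : 1 ≤ gm P μ ν := by
  have hN : 0 < N := μ.pos
  calc (1:ℤ) = 1 * 1 := by ring
  _ ≤ P⁻¹ μ ⟨0, hN⟩ * P⁻¹ ν ⟨0, hN⟩ :=
      mul_le_mul (Qpos0 hP hN μ) (Qpos0 hP hN ν) one_pos.le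
        (le_trans one_pos.le (Qpos0 hP hN μ))
  _ ≤ gm P μ ν := Finset.single_le_sum
      (fun ρ _ => mul_nonneg (Qnonneg hP μ ρ) (Qnonneg hP ν ρ)) (Finset.mem_univ _)

lemma gm_nonneg (μ ν : Fin N) : 0 ≤ gm P μ ν := le_trans one_pos.le (gm_pos hP μ ν)

lemma kk_pos (ν : Fin N) : 1 ≤ kk P ν := by
  calc (1:ℤ) = P⁻¹ ν ν := (Qdiag hP ν).symm
  _ ≤ kk P ν := Finset.single_le_sum (fun ρ _ => Qnonneg hP ν ρ) (Finset.mem_univ _)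

lemma kk_rec (μ : Fin N) : kk P μ = 1 + ∑ s ∈ proxS P μ, kk P s := by
  unfold kk
  rw [Finset.sum_congr rfl (fun ν _ => Qrec hP μ ν), Finset.sum_add_distrib]
  congr 1
  · simp
  · rw [Finset.sum_comm]

lemma gm_rec {ν μ : Fin N} (h : ν < μ) : gm P ν μ = ∑ s ∈ proxS P μ, gm P ν s := by
  unfold gm
  have : ∀ ρ : Fin N, P⁻¹ ν ρ * P⁻¹ μ ρ =
      (if μ = ρ then P⁻¹ ν ρ else 0) + ∑ s ∈ proxS P μ, P⁻¹ ν ρ * P⁻¹ s ρ := by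
    intro ρ
    rw [Qrec hP μ ρ, mul_add, Finset.mul_sum]
    congr 1
    split <;> simp
  rw [Finset.sum_congr rfl (fun ρ _ => this ρ), Finset.sum_add_distrib]
  rw [Finset.sum_ite_eq Finset.univ μ (fun ρ => P⁻¹ ν ρ)]
  simp only [Finset.mem_univ, if_true]
  rw [Qlt hP ν h, zero_add, Finset.sum_comm]

lemma gm_diag_rec (μ : Fin N) : gm P μ μ = 1 + ∑ s ∈ proxS P μ, gm P s μ := by
  unfold gm
  have : ∀ ρ : Fin N, P⁻¹ μ ρ * P⁻¹ μ ρ =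
      (if μ = ρ then P⁻¹ μ ρ else 0) + ∑ s ∈ proxS P μ, P⁻¹ s ρ * P⁻¹ μ ρ := by
    intro ρ
    rw [Qrec hP μ ρ]
    rw [add_mul, Finset.sum_mul]
    congr 1
    split <;> simp
  rw [Finset.sum_congr rfl (fun ρ _ => this ρ), Finset.sum_add_distrib]
  rw [Finset.sum_ite_eq Finset.univ μ (fun ρ => P⁻¹ μ ρ)]
  simp only [Finset.mem_univ, if_true, Qdiag hP μ]
  rw [Finset.sum_comm]

lemma K2g (ν : Fin N) : kk P ν + 1 ≤ 2 * gm P ν ν := by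
  have h1 : ∀ ρ : Fin N, P⁻¹ ν ρ ≤ 2 * (P⁻¹ ν ρ * P⁻¹ ν ρ) - (if ν = ρ then 1 else 0) := by
    intro ρ
    have := Qnonneg hP ν ρ
    by_cases h : ν = ρ
    · subst h; rw [Qdiag hP]; simp
    · simp only [h, if_false, sub_zero]; nlinarith
  have h2 : kk P ν ≤ ∑ ρ : Fin N, (2 * (P⁻¹ ν ρ * P⁻¹ ν ρ) - (if ν = ρ then 1 else 0)) :=
    Finset.sum_le_sum (fun ρ _ => h1 ρ)
  rw [Finset.sum_sub_distrib, ← Finset.mul_sum] at h2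
  simp only [Finset.sum_ite_eq Finset.univ ν (fun _ => (1:ℤ)), Finset.mem_univ, if_true] at h2
  unfold gm
  linarith

end Basic

lemma Msymm {N : ℕ} (P : Matrix (Fin N) (Fin N) ℤ) (a b : Fin N) :
    (Pᵀ * P) a b = (Pᵀ * P) b a := by
  simp only [Matrix.mul_apply, Matrix.transpose_apply]
  exact Finset.sum_congr rfl fun x _ => mul_comm _ _

section Basic2
variable {N : ℕ} {P : Matrix (Fin N) (Fin N) ℤ} (hP : IsProximityMatrix P)
include hP

lemma bothprox_aux {u v m : Fin N} (huv : u < v) (hu : P m u = -1) (hv : P m v = -1) :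
    (Pᵀ * P) u v = 0 := by
  have hvm : v < m := prox_lt hP hv
  have hvu : P v u = -1 := hP.2.2.2.2.1 m u v huv hu hv
  have key : ∀ ρ : Fin N, P ρ u * P ρ v =
      (if ρ = v then -1 else 0) + (if ρ = m then 1 else 0) := by
    intro ρ
    by_cases h1 : ρ = v
    · rw [h1, hvu, hP.1, if_pos rfl, if_neg (ne_of_lt hvm)]; ring
    · by_cases h2 : ρ = m
      · rw [h2, hu, hv, if_neg (ne_of_gt hvm), if_pos rfl]; ring
      · rw [if_neg h1, if_neg h2]
        rcases Pcases hP (μ := ρ) (s := u) with ⟨p1, p2⟩ | p1 | p1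
        · rw [← p2, hP.2.1 u v huv]; ring
        · rcases Pcases hP (μ := ρ) (s := v) with ⟨q1, q2⟩ | q1 | q1
          · exact absurd q2.symm h1
          · exact absurd (hP.2.2.2.2.2 u v ρ m huv p1 q1 hu hv) h2
          · rw [q1]; ring
        · rw [p1]; ring
  rw [Matrix.mul_apply]
  simp only [Matrix.transpose_apply]
  rw [Finset.sum_congr rfl (fun ρ _ => key ρ), Finset.sum_add_distrib,
    Finset.sum_ite_eq' Finset.univ v (fun _ => (-1:ℤ)),
    Finset.sum_ite_eq' Finset.univ m (fun _ => (1:ℤ))]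
  simp

lemma bothprox_M0 {u v m : Fin N} (huv : u ≠ v) (hu : P m u = -1) (hv : P m v = -1) :
    (Pᵀ * P) u v = 0 := by
  rcases Fin.lt_or_lt_of_ne huv with h | h
  · exact bothprox_aux hP h hu hv
  · rw [Msymm]; exact bothprox_aux hP h hv hu

lemma P_offdiag_cases {m s : Fin N} (h : s ≠ m) : P m s = 0 ∨ P m s = -1 := by
  rcases Pcases hP (μ := m) (s := s) with ⟨p1, p2⟩ | p1 | p1
  · exact absurd p2 h
  · right; exact p1
  · left; exact p1

lemma filter_eq_proxS (μ : Fin N) :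
    (Finset.univ.filter fun ν => ν < μ ∧ P μ ν = -1) = proxS P μ := by
  ext s
  simp only [Finset.mem_filter, Finset.mem_univ, true_and, proxS]
  exact ⟨fun h => h.2, fun h => ⟨prox_lt hP h, h⟩⟩

end Basic2

section Del
variable {n : ℕ} {P : Matrix (Fin (n+1)) (Fin (n+1)) ℤ} (hP : IsProximityMatrix P)

local notation "ℓ" => Fin.last n
local notation "P'" => P.submatrix Fin.castSucc Fin.castSucc

include hP

lemma hP' : IsProximityMatrix (P.submatrix Fin.castSucc Fin.castSucc) := by
  refine ⟨fun μ => hP.1 _, fun μ ν h => hP.2.1 _ _ (by simpa using h),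
    fun μ ν h => hP.2.2.1 _ _ (by simpa using h), ?_, ?_, ?_⟩
  · intro μ ⟨ρ, hρ⟩
    have hmap : (Finset.univ.filter fun ν : Fin n => ν < μ ∧ P' μ ν = -1).map
        Fin.castSuccOrderEmb.toEmbedding
        = (Finset.univ.filter fun ν : Fin (n+1) => ν < μ.castSucc ∧ P μ.castSucc ν = -1) := by
      ext x
      simp only [Finset.mem_map, Finset.mem_filter, Finset.mem_univ, true_and,
        RelEmbedding.coe_toEmbedding, Fin.castSuccOrderEmb_apply, Matrix.submatrix_apply,
        Finset.mem_filter_univ]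
      constructor
      · rintro ⟨y, hy, rfl⟩
        obtain ⟨h1, h2⟩ := (Finset.mem_filter.mp hy).2
        exact ⟨by simpa using h1, h2⟩
      · rintro ⟨h1, h2⟩
        have hxl : x ≠ ℓ := Fin.ne_last_of_lt (lt_of_lt_of_le h1 (Fin.le_last _))
        refine ⟨x.castPred hxl, Finset.mem_filter.mpr ⟨Finset.mem_univ _, ?_, ?_⟩, Fin.castSucc_castPred x hxl⟩
        · rw [← Fin.castSucc_lt_castSucc_iff, Fin.castSucc_castPred]; exact h1
        · rw [Fin.castSucc_castPred]; exact h2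
    obtain ⟨hne, hcard⟩ := hP.2.2.2.1 μ.castSucc ⟨ρ.castSucc, by simpa using hρ⟩
    rw [← hmap] at hne hcard
    rw [Finset.card_map] at hcard
    exact ⟨Finset.map_nonempty.mp hne, hcard⟩
  · intro μ ν ρ h h1 h2
    exact hP.2.2.2.2.1 _ _ _ (by simpa using h) h1 h2
  · intro ν ρ μ₁ μ₂ h h1 h2 h3 h4
    exact Fin.castSucc_injective n (hP.2.2.2.2.2 _ _ _ _ (by simpa using h) h1 h2 h3 h4)

lemma Qsub : (P.submatrix Fin.castSucc Fin.castSucc)⁻¹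
    = (P⁻¹).submatrix Fin.castSucc Fin.castSucc := by
  refine (Matrix.inv_eq_right_inv ?_)
  ext i j
  rw [Matrix.mul_apply, Matrix.one_apply]
  have : ∀ k : Fin n, P' i k * (P⁻¹).submatrix Fin.castSucc Fin.castSucc k j
      = P i.castSucc k.castSucc * P⁻¹ k.castSucc j.castSucc := fun k => rfl
  rw [Finset.sum_congr rfl (fun k _ => this k)]
  have hexp := Fin.sum_univ_castSucc (fun k : Fin (n+1) => P i.castSucc k * P⁻¹ k j.castSucc)
  have hlast : P i.castSucc ℓ = 0 := hP.2.1 _ _ (Fin.castSucc_lt_last i)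
  have h2 := congrFun (congrFun (hPQ hP) i.castSucc) j.castSucc
  rw [Matrix.mul_apply, Matrix.one_apply] at h2
  rw [hexp, hlast, zero_mul, add_zero] at h2
  rw [h2]
  simp [Fin.castSucc_inj]

lemma kk_sub (i : Fin n) : kk (P.submatrix Fin.castSucc Fin.castSucc) i = kk P i.castSucc := by
  unfold kk
  rw [Qsub hP]
  have hexp := Fin.sum_univ_castSucc (fun k : Fin (n+1) => P⁻¹ i.castSucc k)
  have hlast : P⁻¹ i.castSucc ℓ = 0 := Qlt hP _ (Fin.castSucc_lt_last i)
  rw [hexp, hlast, add_zero]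
  rfl

lemma gm_sub (i j : Fin n) : gm (P.submatrix Fin.castSucc Fin.castSucc) i j
    = gm P i.castSucc j.castSucc := by
  unfold gm
  rw [Qsub hP]
  have hexp := Fin.sum_univ_castSucc
    (fun k : Fin (n+1) => P⁻¹ i.castSucc k * P⁻¹ j.castSucc k)
  have hlast : P⁻¹ i.castSucc ℓ = 0 := Qlt hP _ (Fin.castSucc_lt_last i)
  rw [hexp, hlast, zero_mul, add_zero]
  rfl

lemma M_sub (i j : Fin n) : ((P')ᵀ * (P')) i j
    = (Pᵀ * P) i.castSucc j.castSucc - P ℓ i.castSucc * P ℓ j.castSucc := by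
  rw [Matrix.mul_apply, Matrix.mul_apply]
  simp only [Matrix.transpose_apply, Matrix.submatrix_apply]
  rw [Fin.sum_univ_castSucc (fun k : Fin (n+1) => P k i.castSucc * P k j.castSucc)]
  ring

lemma Mcol_last (ν : Fin (n+1)) : (Pᵀ * P) ν ℓ = P ℓ ν := by
  rw [Matrix.mul_apply]
  simp only [Matrix.transpose_apply]
  rw [Finset.sum_eq_single ℓ]
  · rw [hP.1]; ring
  · intro b _ hb
    rw [hP.2.1 b ℓ (Fin.lt_last_iff_ne_last.mpr hb), mul_zero]
  · simp

lemma adj_last {ν : Fin (n+1)} : (graph P).Adj ν ℓ ↔ P ℓ ν = -1 := by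
  constructor
  · intro ⟨hne, hM⟩
    rw [Mcol_last hP] at hM; exact hM
  · intro h
    refine ⟨?_, by rw [Mcol_last hP]; exact h⟩
    intro hc; subst hc
    rw [hP.1] at h; omega

lemma adj_down {u v : Fin n} (h : (graph P).Adj u.castSucc v.castSucc) :
    (graph (P.submatrix Fin.castSucc Fin.castSucc)).Adj u v := by
  obtain ⟨hne, hM⟩ := h
  have hne' : u ≠ v := fun hc => hne (by rw [hc])
  have hprod : P ℓ u.castSucc * P ℓ v.castSucc = 0 := by
    by_cases h1 : P ℓ u.castSucc = -1
    · by_cases h2 : P ℓ v.castSucc = -1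
      · exact absurd (bothprox_M0 hP hne h1 h2) (by rw [hM]; omega)
      · rcases P_offdiag_cases hP (Fin.ne_last_of_lt (Fin.castSucc_lt_last v)) with h3 | h3
        · rw [h3, mul_zero]
        · exact absurd h3 h2
    · rcases P_offdiag_cases hP (Fin.ne_last_of_lt (Fin.castSucc_lt_last u)) with h3 | h3
      · rw [h3, zero_mul]
      · exact absurd h3 h1
  exact ⟨hne', by rw [M_sub hP, hM, hprod]; ring⟩

lemma adj_up {u v : Fin n} (h : (graph (P.submatrix Fin.castSucc Fin.castSucc)).Adj u v)
    (hnb : ¬(P ℓ u.castSucc = -1 ∧ P ℓ v.castSucc = -1)) :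
    (graph P).Adj u.castSucc v.castSucc := by
  obtain ⟨hne, hM⟩ := h
  rw [M_sub hP] at hM
  have hprod : P ℓ u.castSucc * P ℓ v.castSucc = 0 := by
    by_cases h1 : P ℓ u.castSucc = -1
    · by_cases h2 : P ℓ v.castSucc = -1
      · exact absurd ⟨h1, h2⟩ hnb
      · rcases P_offdiag_cases hP (Fin.ne_last_of_lt (Fin.castSucc_lt_last v)) with h3 | h3
        · rw [h3, mul_zero]
        · exact absurd h3 h2
    · rcases P_offdiag_cases hP (Fin.ne_last_of_lt (Fin.castSucc_lt_last u)) with h3 | h3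
      · rw [h3, zero_mul]
      · exact absurd h3 h1
  refine ⟨fun hc => hne (Fin.castSucc_injective n hc), by omega⟩

lemma adj_not_up {u v : Fin n} (h1 : P ℓ u.castSucc = -1) (h2 : P ℓ v.castSucc = -1)
    (hne : u ≠ v) : ¬ (graph P).Adj u.castSucc v.castSucc := by
  intro ⟨_, hM⟩
  rw [bothprox_M0 hP (fun hc => hne (Fin.castSucc_injective n hc)) h1 h2] at hM
  omega

lemma prox_pair_adj {a b : Fin n} (h1 : P ℓ a.castSucc = -1) (h2 : P ℓ b.castSucc = -1)
    (hne : a ≠ b) : (graph (P.submatrix Fin.castSucc Fin.castSucc)).Adj a b := by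
  have hM0 : (Pᵀ * P) a.castSucc b.castSucc = 0 :=
    bothprox_M0 hP (fun hc => hne (Fin.castSucc_injective n hc)) h1 h2
  refine ⟨hne, ?_⟩
  rw [M_sub hP, hM0, h1, h2]; ring

end Del


section Kb
variable {N : ℕ} {P : Matrix (Fin N) (Fin N) ℤ} (hP : IsProximityMatrix P)
include hP

lemma Qprox_le {μ s : Fin N} (hs : s ∈ proxS P μ) (ν : Fin N) : P⁻¹ s ν ≤ P⁻¹ μ ν := by
  rw [Qrec hP μ ν]
  have h1 : (0:ℤ) ≤ if μ = ν then 1 else 0 := by positivity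
  have h2 : P⁻¹ s ν ≤ ∑ t ∈ proxS P μ, P⁻¹ t ν :=
    Finset.single_le_sum (fun t _ => Qnonneg hP t ν) hs
  linarith

lemma Kbound {η τ x : Fin N} (h1 : 1 ≤ P⁻¹ η x) (h2 : 1 ≤ P⁻¹ τ x) :
    kk P η + 1 ≤ gm P η η + gm P η τ := by
  have hf : ∀ ρ : Fin N, P⁻¹ η ρ + (if ρ = x then 1 else 0) ≤
      P⁻¹ η ρ * P⁻¹ η ρ + P⁻¹ η ρ * P⁻¹ τ ρ := by
    intro ρ
    have q1 := Qnonneg hP η ρ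
    have q2 := Qnonneg hP τ ρ
    by_cases h : ρ = x
    · subst h
      simp only [if_pos rfl, eq_self_iff_true, if_true]
      nlinarith
    · simp only [if_neg h, add_zero]
      nlinarith
  have hsum := Finset.sum_le_sum (fun ρ (_ : ρ ∈ Finset.univ) => hf ρ)
  rw [Finset.sum_add_distrib, Finset.sum_add_distrib,
    Finset.sum_ite_eq' Finset.univ x (fun _ => (1:ℤ))] at hsum
  simp only [Finset.mem_univ, if_true] at hsum
  unfold gm kk
  convert hsum using 2

end Kb


section Zar
variable {A B C k t : ℤ}

lemma zar_key (h8 : A * C = B * B + B) :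
    C * ((A + B) * (1 + (k + t) + 2) - (1 + A + 2*B + C) * (k + 1))
    = (B + C + 1) * (B * (t + 2) - C * (k + 1)) := by
  linear_combination (t + 2) * h8

lemma zar1 (hB : 1 ≤ B) (hC : 1 ≤ C) (h8 : A * C = B * B + B)
    (hs : C * (k + 1) ≤ B * (t + 2)) :
    (1 + A + 2*B + C) * (k + 1) ≤ (A + B) * (1 + (k + t) + 2) := by
  have key := zar_key (k := k) (t := t) h8
  by_contra hX
  push_neg at hX
  have hneg : (A + B) * (1 + (k + t) + 2) - (1 + A + 2*B + C) * (k + 1) < 0 := by linarith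
  have h2 := mul_neg_of_pos_of_neg (by linarith : (0:ℤ) < C) hneg
  rw [key] at h2
  have h3 : 0 ≤ (B + C + 1) * (B * (t + 2) - C * (k + 1)) :=
    mul_nonneg (by linarith) (by linarith)
  linarith

lemma zar1eq (hC : 1 ≤ C) (h8 : A * C = B * B + B) (hs : C * (k + 1) = B * (t + 2)) :
    (1 + A + 2*B + C) * (k + 1) = (A + B) * (1 + (k + t) + 2) := by
  have key := zar_key (k := k) (t := t) h8
  have h0 : B * (t + 2) - C * (k + 1) = 0 := by linarith
  rw [h0, mul_zero] at key
  rcases mul_eq_zero.mp key with hc | hc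
  · linarith
  · linarith

lemma zar1rev (hB : 1 ≤ B) (hC : 1 ≤ C) (h8 : A * C = B * B + B)
    (heq : (1 + A + 2*B + C) * (k + 1) = (A + B) * (1 + (k + t) + 2)) :
    B * (t + 2) = C * (k + 1) := by
  have key := zar_key (k := k) (t := t) h8
  have h0 : (A + B) * (1 + (k + t) + 2) - (1 + A + 2*B + C) * (k + 1) = 0 := by linarith
  rw [h0, mul_zero] at key
  rcases mul_eq_zero.mp key.symm with hc | hc
  · linarith
  · linarith

lemma zar2 (hk : 0 ≤ k) (h1 : A * t ≤ B * (k + 1)) (h2 : B * t ≤ C * (k + 1)) :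
    (A + B) * (1 + (k + t)) < (1 + A + 2*B + C) * (k + 1) := by nlinarith

lemma zar4 (hA : 0 ≤ A) (h4 : B * (k + 1) < A * (t + 2)) :
    (A + B) * (k + 1) < A * (1 + (k + t) + 2) := by nlinarith

end Zar

/-- The inductive package for an adjacent pair. -/
def GoodPair {N : ℕ} (P : Matrix (Fin N) (Fin N) ℤ) (γ η : Fin N) : Prop :=
  (∀ μ, gm P η μ * (kk P γ + 1) ≤ gm P γ μ * (kk P η + 2)) ∧
  (∀ μ, gm P γ μ * (kk P η) ≤ gm P η μ * (kk P γ + 1)) ∧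
  (∀ μ, 0 < P⁻¹ μ η → gm P γ μ * (kk P η) < gm P η μ * (kk P γ + 1)) ∧
  (gm P η γ * (kk P γ + 1) < gm P γ γ * (kk P η + 2)) ∧
  (gm P γ γ * gm P η η = gm P γ η * gm P γ η + gm P γ η) ∧
  ((∀ ν, (graph P).Adj γ ν → ν = η) →
     ∀ μ, μ ≠ γ → gm P η μ * (kk P γ + 1) = gm P γ μ * (kk P η + 2)) ∧
  (∀ μ, gm P η μ * (kk P γ + 1) = gm P γ μ * (kk P η + 2) →
     ∀ τ, (graph P).Adj γ τ → τ ≠ η → P⁻¹ μ τ = 0 ∧ P⁻¹ γ τ = 0)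

set_option maxHeartbeats 4000000 in
theorem master : ∀ (N : ℕ) (P : Matrix (Fin N) (Fin N) ℤ), IsProximityMatrix P →
    (∀ γ η, (graph P).Adj γ η → GoodPair P γ η) ∧
    (∀ x y, (graph P).Reachable x y) := by
  intro N
  induction N with
  | zero => exact fun P hP => ⟨fun γ => γ.elim0, fun x => x.elim0⟩
  | succ n ih =>
    intro P hP
    match n, ih with
    | 0, _ =>
      constructor
      · intro γ η hadj
        exact absurd (by omega : γ = η) hadj.1
      · intro x y
        have : x = y := by omega
        rw [this]
    | (m+1), ih =>
      obtain ⟨pack', reach'⟩ := ih (P.submatrix Fin.castSucc Fin.castSucc) (hP' hP)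
      set ℓ : Fin (m+2) := Fin.last (m+1) with hℓdef
      -- transfers
      have hkk : ∀ i : Fin (m+1), kk (P.submatrix Fin.castSucc Fin.castSucc) i
          = kk P i.castSucc := kk_sub hP
      have hgm : ∀ i j : Fin (m+1), gm (P.submatrix Fin.castSucc Fin.castSucc) i j
          = gm P i.castSucc j.castSucc := gm_sub hP
      have hQQ : ∀ i j : Fin (m+1), (P.submatrix Fin.castSucc Fin.castSucc)⁻¹ i j
          = P⁻¹ i.castSucc j.castSucc := by
        intro i j; rw [Qsub hP]; rfl
      -- prox structure of the last vertex
      obtain ⟨hne0, hcard0⟩ := hP.2.2.2.1 ℓ ⟨0, Fin.last_pos⟩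
      rw [filter_eq_proxS hP] at hne0 hcard0
      have hc12 : (proxS P ℓ).card = 1 ∨ (proxS P ℓ).card = 2 := by
        have := Finset.card_pos.mpr hne0; omega
      -- reachability
      have hreach : ∀ x y : Fin (m+2), (graph P).Reachable x y := by
        obtain ⟨s0, hs0⟩ := hne0
        have hs0p : P ℓ s0 = -1 := prox_mem hP hs0
        have hs0l : s0 < ℓ := prox_lt hP hs0p
        have elift : ∀ u v : Fin (m+1),
            (graph (P.submatrix Fin.castSucc Fin.castSucc)).Adj u v →
            (graph P).Reachable u.castSucc v.castSucc := by
          intro u v h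
          by_cases hb : P ℓ u.castSucc = -1 ∧ P ℓ v.castSucc = -1
          · exact (((adj_last hP).mpr hb.1).reachable).trans
              (((adj_last hP).mpr hb.2).symm.reachable)
          · exact (adj_up hP h hb).reachable
        have wlift : ∀ (u v : Fin (m+1))
            (w : (graph (P.submatrix Fin.castSucc Fin.castSucc)).Walk u v),
            (graph P).Reachable u.castSucc v.castSucc := by
          intro u v w
          induction w with
          | nil => exact SimpleGraph.Reachable.refl _
          | cons h p ihw => exact (elift _ _ h).trans ihw
        have reach_c : ∀ x y : Fin (m+1), (graph P).Reachable x.castSucc y.castSucc :=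
          fun x y => (reach' x y).elim (fun w => wlift x y w)
        have reach_l : ∀ x : Fin (m+1), (graph P).Reachable x.castSucc ℓ := by
          intro x
          have h1 : (graph P).Reachable s0 ℓ := ((adj_last hP).mpr hs0p).reachable
          obtain ⟨s0', rfl⟩ : ∃ t : Fin (m+1), t.castSucc = s0 :=
            ⟨s0.castPred (Fin.ne_last_of_lt hs0l), Fin.castSucc_castPred _ _⟩
          exact (reach_c x s0').trans h1
        intro x y
        by_cases hx : x = ℓ <;> by_cases hy : y = ℓ
        · rw [hx, hy]
        · obtain ⟨y', rfl⟩ : ∃ t : Fin (m+1), t.castSucc = y :=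
            ⟨y.castPred hy, Fin.castSucc_castPred _ _⟩
          rw [hx]; exact (reach_l y').symm
        · obtain ⟨x', rfl⟩ : ∃ t : Fin (m+1), t.castSucc = x :=
            ⟨x.castPred hx, Fin.castSucc_castPred _ _⟩
          rw [hy]; exact reach_l x'
        · obtain ⟨x', rfl⟩ : ∃ t : Fin (m+1), t.castSucc = x :=
            ⟨x.castPred hx, Fin.castSucc_castPred _ _⟩
          obtain ⟨y', rfl⟩ : ∃ t : Fin (m+1), t.castSucc = y :=
            ⟨y.castPred hy, Fin.castSucc_castPred _ _⟩
          exact reach_c x' y'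
      refine ⟨?_, hreach⟩
      intro γ η hadj
      by_cases hγℓ : γ = ℓ
      · -- Case II : γ = ℓ
        subst hγℓ
        have hηℓ : η ≠ ℓ := hadj.1.symm
        obtain ⟨η', rfl⟩ : ∃ t : Fin (m+1), t.castSucc = η :=
          ⟨η.castPred hηℓ, Fin.castSucc_castPred _ _⟩
        have hηp : P ℓ η'.castSucc = -1 := (adj_last hP).mp hadj.symm
        have hηmem : η'.castSucc ∈ proxS P ℓ := mem_prox hP hηp
        have hkpos := kk_pos hP η'.castSucc
        have hApos := gm_pos hP η'.castSucc η'.castSucc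
        have hK2 := K2g hP η'.castSucc
        rcases hc12 with h1 | h2
        · -- Scenario A : proxS P ℓ = {η}
          obtain ⟨a0, ha0⟩ := Finset.card_eq_one.mp h1
          have hηa0 : η'.castSucc = a0 := by
            rw [ha0] at hηmem; simpa using hηmem
          rw [← hηa0] at ha0
          have hkkL : kk P ℓ = 1 + kk P η'.castSucc := by
            rw [kk_rec hP ℓ, ha0, Finset.sum_singleton]
          have hgmL : ∀ ν : Fin (m+1), gm P ν.castSucc ℓ = gm P ν.castSucc η'.castSucc := by
            intro ν
            rw [gm_rec hP (Fin.castSucc_lt_last ν), ha0, Finset.sum_singleton]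
          have hgmL2 : ∀ ν : Fin (m+1), gm P ℓ ν.castSucc = gm P η'.castSucc ν.castSucc := by
            intro ν
            rw [gm_symm hP ℓ ν.castSucc, hgmL ν, gm_symm hP]
          have hgmLL : gm P ℓ ℓ = 1 + gm P η'.castSucc η'.castSucc := by
            rw [gm_diag_rec hP ℓ, ha0, Finset.sum_singleton, hgmL η']
          refine ⟨?_, ?_, ?_, ?_, ?_, ?_, ?_⟩
          · -- S1
            intro μ
            by_cases hμℓ : μ = ℓ
            · subst hμℓ
              rw [hgmL η', hgmLL, hkkL]
              linarith [hkpos, hApos, hK2]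
            · obtain ⟨μ', rfl⟩ : ∃ t : Fin (m+1), t.castSucc = μ :=
                ⟨μ.castPred hμℓ, Fin.castSucc_castPred _ _⟩
              rw [hgmL2 μ', hkkL]
              exact le_of_eq (by ring)
          · -- S2
            intro μ
            by_cases hμℓ : μ = ℓ
            · subst hμℓ
              rw [hgmL η', hgmLL, hkkL]
              linarith [hkpos, hApos, hK2]
            · obtain ⟨μ', rfl⟩ : ∃ t : Fin (m+1), t.castSucc = μ :=
                ⟨μ.castPred hμℓ, Fin.castSucc_castPred _ _⟩
              rw [hgmL2 μ', hkkL]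
              have := gm_nonneg hP η'.castSucc μ'.castSucc
              nlinarith [this]
          · -- S3
            intro μ hQpos
            by_cases hμℓ : μ = ℓ
            · subst hμℓ
              rw [hgmL η', hgmLL, hkkL]
              linarith [hkpos, hApos, hK2]
            · obtain ⟨μ', rfl⟩ : ∃ t : Fin (m+1), t.castSucc = μ :=
                ⟨μ.castPred hμℓ, Fin.castSucc_castPred _ _⟩
              rw [hgmL2 μ', hkkL]
              have := gm_pos hP η'.castSucc μ'.castSucc
              nlinarith [this]
          · -- S4
            rw [hgmL η', hgmLL, hkkL]
            linarith [hkpos, hApos, hK2]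
          · -- S8
            rw [hgmLL, hgmL2 η']
            ring
          · -- S6
            intro _ μ hμγ
            obtain ⟨μ', rfl⟩ : ∃ t : Fin (m+1), t.castSucc = μ :=
              ⟨μ.castPred hμγ, Fin.castSucc_castPred _ _⟩
            rw [hgmL2 μ', hkkL]
            ring
          · -- SE
            intro μ heq τ' hadjτ' hτ'η
            exfalso
            have hτ'p : P ℓ τ' = -1 := (adj_last hP).mp hadjτ'.symm
            have : τ' ∈ proxS P ℓ := mem_prox hP hτ'p
            rw [ha0] at this
            simp only [Finset.mem_singleton] at this
            exact hτ'η this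
        · -- Scenario B : proxS P ℓ = {η, τ0}
          obtain ⟨a0, b0, hab, hpairab⟩ := Finset.card_eq_two.mp h2
          have hηin : η'.castSucc = a0 ∨ η'.castSucc = b0 := by
            rw [hpairab] at hηmem; simpa using hηmem
          obtain ⟨τ0, hτ0ne, hpair⟩ : ∃ τ0 : Fin (m+2), τ0 ≠ η'.castSucc ∧
              proxS P ℓ = {η'.castSucc, τ0} := by
            rcases hηin with hc | hc
            · exact ⟨b0, by rw [← hc] at hab; exact hab.symm, by rw [hpairab, hc]⟩
            · refine ⟨a0, by rw [← hc] at hab; exact hab, ?_⟩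
              rw [hpairab, ← hc, Finset.pair_comm]
          have hτ0mem : τ0 ∈ proxS P ℓ := by rw [hpair]; simp
          have hτ0p : P ℓ τ0 = -1 := prox_mem hP hτ0mem
          have hτ0l : τ0 < ℓ := prox_lt hP hτ0p
          obtain ⟨τ'', rfl⟩ : ∃ t : Fin (m+1), t.castSucc = τ0 :=
            ⟨τ0.castPred (Fin.ne_last_of_lt hτ0l), Fin.castSucc_castPred _ _⟩
          have hτη' : τ'' ≠ η' := fun hc => hτ0ne (by rw [hc])
          have hadj'' : (graph (P.submatrix Fin.castSucc Fin.castSucc)).Adj τ'' η' :=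
            prox_pair_adj hP hτ0p hηp hτη'
          obtain ⟨T1, T2, T3, T4, T8, T6, TE⟩ := pack' τ'' η' hadj''
          simp only [hgm, hkk, hQQ] at T1 T2 T3 T4 T8
          have hkkL : kk P ℓ = 1 + (kk P η'.castSucc + kk P τ''.castSucc) := by
            rw [kk_rec hP ℓ, hpair, Finset.sum_pair (fun hc => hτ0ne (by rw [hc]))]
          have hgmL : ∀ ν : Fin (m+1), gm P ν.castSucc ℓ
              = gm P ν.castSucc η'.castSucc + gm P ν.castSucc τ''.castSucc := by
            intro ν
            rw [gm_rec hP (Fin.castSucc_lt_last ν), hpair,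
              Finset.sum_pair (fun hc => hτ0ne (by rw [hc]))]
          have hgmL2 : ∀ ν : Fin (m+1), gm P ℓ ν.castSucc
              = gm P η'.castSucc ν.castSucc + gm P τ''.castSucc ν.castSucc := by
            intro ν
            rw [gm_symm hP ℓ ν.castSucc, hgmL ν, gm_symm hP ν.castSucc η'.castSucc,
              gm_symm hP ν.castSucc τ''.castSucc]
          have hgmLL : gm P ℓ ℓ = 1 + gm P η'.castSucc η'.castSucc
              + 2 * gm P η'.castSucc τ''.castSucc + gm P τ''.castSucc τ''.castSucc := by
            rw [gm_diag_rec hP ℓ, hpair, Finset.sum_pair (fun hc => hτ0ne (by rw [hc])),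
              hgmL η', hgmL τ'', gm_symm hP τ''.castSucc η'.castSucc]
            ring
          have hkτpos := kk_pos hP τ''.castSucc
          have hBpos := gm_pos hP η'.castSucc τ''.castSucc
          have hCpos := gm_pos hP τ''.castSucc τ''.castSucc
          -- IH instances in convenient form
          have hT1η := T1 η'
          rw [gm_symm hP τ''.castSucc η'.castSucc] at hT1η
          have hT1τ := T1 τ''
          have hT2η := T2 η'
          rw [gm_symm hP τ''.castSucc η'.castSucc] at hT2η
          have hT2τ := T2 τ''
          -- Kbound
          have hKb : kk P η'.castSucc + 1
              ≤ gm P η'.castSucc η'.castSucc + gm P η'.castSucc τ''.castSucc := by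
            rcases Fin.lt_or_lt_of_ne (fun hc => hτη' (Fin.castSucc_injective _ hc).symm :
                η'.castSucc ≠ τ''.castSucc) with hlt | hlt
            · have hPτη : P τ''.castSucc η'.castSucc = -1 :=
                hP.2.2.2.2.1 ℓ η'.castSucc τ''.castSucc hlt hηp hτ0p
              have h1 : 1 ≤ P⁻¹ η'.castSucc η'.castSucc := by rw [Qdiag hP]
              have h2 : 1 ≤ P⁻¹ τ''.castSucc η'.castSucc := by
                have := Qprox_le hP (mem_prox hP hPτη) η'.castSucc
                rw [Qdiag hP] at this
                exact this
              exact Kbound hP h1 h2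
            · have hPητ : P η'.castSucc τ''.castSucc = -1 :=
                hP.2.2.2.2.1 ℓ τ''.castSucc η'.castSucc hlt hτ0p hηp
              have h1 : 1 ≤ P⁻¹ η'.castSucc τ''.castSucc := by
                have := Qprox_le hP (mem_prox hP hPητ) τ''.castSucc
                rw [Qdiag hP] at this
                exact this
              have h2 : 1 ≤ P⁻¹ τ''.castSucc τ''.castSucc := by rw [Qdiag hP]
              exact Kbound hP h1 h2
          refine ⟨?_, ?_, ?_, ?_, ?_, ?_, ?_⟩
          · -- S1
            intro μ
            by_cases hμℓ : μ = ℓ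
            · subst hμℓ
              rw [hgmL η', hgmLL, hkkL]
              linarith [hT1η, hT1τ, hApos, hBpos]
            · obtain ⟨μ', rfl⟩ : ∃ t : Fin (m+1), t.castSucc = μ :=
                ⟨μ.castPred hμℓ, Fin.castSucc_castPred _ _⟩
              rw [hgmL2 μ', hkkL]
              linarith [T1 μ', gm_nonneg hP η'.castSucc μ'.castSucc]
          · -- S2
            intro μ
            by_cases hμℓ : μ = ℓ
            · subst hμℓ
              rw [hgmL η', hgmLL, hkkL]
              linarith [hT2η, hT2τ, hKb, hkpos]
            · obtain ⟨μ', rfl⟩ : ∃ t : Fin (m+1), t.castSucc = μ :=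
                ⟨μ.castPred hμℓ, Fin.castSucc_castPred _ _⟩
              rw [hgmL2 μ', hkkL]
              linarith [T2 μ', gm_nonneg hP η'.castSucc μ'.castSucc]
          · -- S3
            intro μ hQpos
            by_cases hμℓ : μ = ℓ
            · subst hμℓ
              rw [hgmL η', hgmLL, hkkL]
              linarith [hT2η, hT2τ, hKb, hkpos]
            · obtain ⟨μ', rfl⟩ : ∃ t : Fin (m+1), t.castSucc = μ :=
                ⟨μ.castPred hμℓ, Fin.castSucc_castPred _ _⟩
              rw [hgmL2 μ', hkkL]
              linarith [T2 μ', gm_pos hP η'.castSucc μ'.castSucc]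
          · -- S4
            rw [hgmL η', hgmLL, hkkL]
            linarith [hT1η, hT1τ, hApos, hBpos, hkpos]
          · -- S8
            rw [hgmLL, hgmL2 η', gm_symm hP τ''.castSucc η'.castSucc]
            rw [gm_symm hP τ''.castSucc η'.castSucc] at T8
            linear_combination T8
          · -- S6
            intro hleaf _ _
            exfalso
            have hadjτ : (graph P).Adj ℓ τ''.castSucc := ((adj_last hP).mpr hτ0p).symm
            exact hτ0ne (hleaf τ''.castSucc hadjτ)
          · -- SE
            intro μ heq τ' hadjτ' hτ'η
            exfalso
            by_cases hμℓ : μ = ℓ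
            · subst hμℓ
              rw [hgmL η', hgmLL, hkkL] at heq
              linarith [hT1η, hT1τ, hApos, hBpos, hkpos]
            · obtain ⟨μ', rfl⟩ : ∃ t : Fin (m+1), t.castSucc = μ :=
                ⟨μ.castPred hμℓ, Fin.castSucc_castPred _ _⟩
              rw [hgmL2 μ', hkkL] at heq
              linarith [T1 μ', gm_pos hP η'.castSucc μ'.castSucc]
      · by_cases hηℓ : η = ℓ
        · -- Case III : η = ℓ
          subst hηℓ
          obtain ⟨γ', rfl⟩ : ∃ t : Fin (m+1), t.castSucc = γ :=
            ⟨γ.castPred hγℓ, Fin.castSucc_castPred _ _⟩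
          have hγp : P ℓ γ'.castSucc = -1 := (adj_last hP).mp hadj
          have hγmem : γ'.castSucc ∈ proxS P ℓ := mem_prox hP hγp
          have hkpos := kk_pos hP γ'.castSucc
          have hApos := gm_pos hP γ'.castSucc γ'.castSucc
          rcases hc12 with h1 | h2
          · -- Scenario A : proxS P ℓ = {γ}
            obtain ⟨a0, ha0⟩ := Finset.card_eq_one.mp h1
            have hγa0 : γ'.castSucc = a0 := by
              rw [ha0] at hγmem; simpa using hγmem
            rw [← hγa0] at ha0
            have hkkL : kk P ℓ = 1 + kk P γ'.castSucc := by
              rw [kk_rec hP ℓ, ha0, Finset.sum_singleton]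
            have hgmL : ∀ ν : Fin (m+1), gm P ν.castSucc ℓ = gm P ν.castSucc γ'.castSucc := by
              intro ν
              rw [gm_rec hP (Fin.castSucc_lt_last ν), ha0, Finset.sum_singleton]
            have hgmL2 : ∀ ν : Fin (m+1), gm P ℓ ν.castSucc = gm P γ'.castSucc ν.castSucc := by
              intro ν
              rw [gm_symm hP ℓ ν.castSucc, hgmL ν, gm_symm hP]
            have hgmLL : gm P ℓ ℓ = 1 + gm P γ'.castSucc γ'.castSucc := by
              rw [gm_diag_rec hP ℓ, ha0, Finset.sum_singleton, hgmL γ']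
            have hK2 := K2g hP γ'.castSucc
            refine ⟨?_, ?_, ?_, ?_, ?_, ?_, ?_⟩
            · -- S1
              intro μ
              by_cases hμℓ : μ = ℓ
              · subst hμℓ
                rw [hgmLL, hgmL γ', hkkL]
                nlinarith
              · obtain ⟨μ', rfl⟩ : ∃ t : Fin (m+1), t.castSucc = μ :=
                  ⟨μ.castPred hμℓ, Fin.castSucc_castPred _ _⟩
                rw [hgmL2 μ', hkkL]
                have := gm_nonneg hP γ'.castSucc μ'.castSucc
                nlinarith
            · -- S2
              intro μ
              by_cases hμℓ : μ = ℓ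
              · subst hμℓ
                rw [hgmLL, hgmL γ', hkkL]
                nlinarith
              · obtain ⟨μ', rfl⟩ : ∃ t : Fin (m+1), t.castSucc = μ :=
                  ⟨μ.castPred hμℓ, Fin.castSucc_castPred _ _⟩
                rw [hgmL2 μ', hkkL]
                exact le_of_eq (by ring)
            · -- S3
              intro μ hQpos
              by_cases hμℓ : μ = ℓ
              · subst hμℓ
                rw [hgmLL, hgmL γ', hkkL]
                nlinarith
              · exfalso
                obtain ⟨μ', rfl⟩ : ∃ t : Fin (m+1), t.castSucc = μ :=
                  ⟨μ.castPred hμℓ, Fin.castSucc_castPred _ _⟩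
                rw [Qlt hP _ (Fin.castSucc_lt_last μ')] at hQpos
                omega
            · -- S4
              rw [hgmL2 γ', hkkL]
              nlinarith
            · -- S8
              rw [hgmLL, hgmL γ']
              ring
            · -- S6
              intro hleaf μ hμγ
              have allIn : ∀ x : Fin (m+2), x = γ'.castSucc ∨ x = ℓ := by
                have closed : ∀ u v : Fin (m+2), (u = γ'.castSucc ∨ u = ℓ) →
                    (graph P).Adj u v → (v = γ'.castSucc ∨ v = ℓ) := by
                  rintro u v (rfl | rfl) hA
                  · right; exact hleaf v hA
                  · left
                    have hvp : P ℓ v = -1 := (adj_last hP).mp hA.symm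
                    have : v ∈ proxS P ℓ := mem_prox hP hvp
                    rw [ha0] at this; simpa using this
                have wclosed : ∀ (u v : Fin (m+2)) (w : (graph P).Walk u v),
                    (u = γ'.castSucc ∨ u = ℓ) → (v = γ'.castSucc ∨ v = ℓ) := by
                  intro u v w
                  induction w with
                  | nil => exact id
                  | cons hA p ihw => exact fun hu => ihw (closed _ _ hu hA)
                intro x
                exact (hreach γ'.castSucc x).elim
                  (fun w => wclosed _ _ w (Or.inl rfl))
              have hQγ : ∀ ρ : Fin (m+2), P⁻¹ γ'.castSucc ρ
                  = if ρ = γ'.castSucc then 1 else 0 := by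
                intro ρ
                rcases allIn ρ with rfl | rfl
                · rw [if_pos rfl, Qdiag hP]
                · rw [if_neg (fun hc => hγℓ hc.symm), Qlt hP _ (Fin.castSucc_lt_last γ')]
              have hkk1 : kk P γ'.castSucc = 1 := by
                unfold kk
                rw [Finset.sum_congr rfl (fun ρ _ => hQγ ρ),
                  Finset.sum_ite_eq' Finset.univ γ'.castSucc (fun _ => (1:ℤ))]
                simp
              have hA1 : gm P γ'.castSucc γ'.castSucc = 1 := by
                unfold gm
                have : ∀ ρ : Fin (m+2), P⁻¹ γ'.castSucc ρ * P⁻¹ γ'.castSucc ρ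
                    = if ρ = γ'.castSucc then 1 else 0 := by
                  intro ρ
                  rw [hQγ ρ]
                  split <;> ring
                rw [Finset.sum_congr rfl (fun ρ _ => this ρ),
                  Finset.sum_ite_eq' Finset.univ γ'.castSucc (fun _ => (1:ℤ))]
                simp
              by_cases hμℓ : μ = ℓ
              · subst hμℓ
                rw [hgmLL, hgmL γ', hkkL, hkk1, hA1]
                norm_num
              · exfalso
                obtain ⟨μ', rfl⟩ : ∃ t : Fin (m+1), t.castSucc = μ :=
                  ⟨μ.castPred hμℓ, Fin.castSucc_castPred _ _⟩
                rcases allIn μ'.castSucc with hc | hc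
                · exact hμγ hc
                · exact hμℓ hc
            · -- SE
              intro μ heq τ' hadjτ' hτ'η
              have hτ'γ : τ' ≠ γ'.castSucc := fun hc => hadjτ'.1 hc.symm
              by_cases hμℓ : μ = ℓ
              · subst hμℓ
                rw [hgmLL, hgmL γ', hkkL] at heq
                -- heq gives kk γ + 1 = 2 * gm γ γ
                have hs : kk P γ'.castSucc + 1 = 2 * gm P γ'.castSucc γ'.castSucc := by
                  nlinarith
                have hQz : ∀ ρ : Fin (m+2), ρ ≠ γ'.castSucc → P⁻¹ γ'.castSucc ρ = 0 := by
                  intro ρ hρ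
                  have hf : ∀ x : Fin (m+2), 0 ≤ 2 * (P⁻¹ γ'.castSucc x * P⁻¹ γ'.castSucc x)
                      - P⁻¹ γ'.castSucc x - (if x = γ'.castSucc then 1 else 0) := by
                    intro x
                    have hq := Qnonneg hP γ'.castSucc x
                    by_cases hx : x = γ'.castSucc
                    · subst hx; rw [Qdiag hP, if_pos rfl]; ring_nf; omega
                    · rw [if_neg hx]; nlinarith
                  have hsum : ∑ x : Fin (m+2), (2 * (P⁻¹ γ'.castSucc x * P⁻¹ γ'.castSucc x)
                      - P⁻¹ γ'.castSucc x - (if x = γ'.castSucc then 1 else 0)) = 0 := by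
                    rw [Finset.sum_sub_distrib, Finset.sum_sub_distrib, ← Finset.mul_sum,
                      Finset.sum_ite_eq' Finset.univ γ'.castSucc (fun _ => (1:ℤ))]
                    simp only [Finset.mem_univ, if_true]
                    have e1 : ∑ x : Fin (m+2), P⁻¹ γ'.castSucc x * P⁻¹ γ'.castSucc x
                        = gm P γ'.castSucc γ'.castSucc := rfl
                    have e2 : ∑ x : Fin (m+2), P⁻¹ γ'.castSucc x = kk P γ'.castSucc := rfl
                    rw [e1, e2]; omega
                  have hterm := (Finset.sum_eq_zero_iff_of_nonneg
                    (fun x (_ : x ∈ Finset.univ) => hf x)).mp hsum ρ (Finset.mem_univ ρ)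
                  rw [if_neg hρ] at hterm
                  have hq := Qnonneg hP γ'.castSucc ρ
                  by_contra hne
                  have hq1 : 1 ≤ P⁻¹ γ'.castSucc ρ := by omega
                  nlinarith
                constructor
                · rw [Qrec hP ℓ τ', ha0, Finset.sum_singleton,
                    if_neg (fun hc => hτ'η (by rw [← hc])), hQz τ' hτ'γ]
                  · ring
                · exact hQz τ' hτ'γ
              · exfalso
                obtain ⟨μ', rfl⟩ : ∃ t : Fin (m+1), t.castSucc = μ :=
                  ⟨μ.castPred hμℓ, Fin.castSucc_castPred _ _⟩
                rw [hgmL2 μ', hkkL] at heq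
                have := gm_pos hP γ'.castSucc μ'.castSucc
                nlinarith
          · -- Scenario B : proxS P ℓ = {γ, τ0}
            obtain ⟨a0, b0, hab, hpairab⟩ := Finset.card_eq_two.mp h2
            have hγin : γ'.castSucc = a0 ∨ γ'.castSucc = b0 := by
              rw [hpairab] at hγmem; simpa using hγmem
            obtain ⟨τ0, hτ0ne, hpair⟩ : ∃ τ0 : Fin (m+2), τ0 ≠ γ'.castSucc ∧
                proxS P ℓ = {γ'.castSucc, τ0} := by
              rcases hγin with hc | hc
              · exact ⟨b0, by rw [← hc] at hab; exact hab.symm, by rw [hpairab, hc]⟩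
              · refine ⟨a0, by rw [← hc] at hab; exact hab, ?_⟩
                rw [hpairab, ← hc, Finset.pair_comm]
            have hτ0mem : τ0 ∈ proxS P ℓ := by rw [hpair]; simp
            have hτ0p : P ℓ τ0 = -1 := prox_mem hP hτ0mem
            have hτ0l : τ0 < ℓ := prox_lt hP hτ0p
            obtain ⟨τ'', rfl⟩ : ∃ t : Fin (m+1), t.castSucc = τ0 :=
              ⟨τ0.castPred (Fin.ne_last_of_lt hτ0l), Fin.castSucc_castPred _ _⟩
            have hγτ' : γ' ≠ τ'' := fun hc => hτ0ne (by rw [hc])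
            have hadj'' : (graph (P.submatrix Fin.castSucc Fin.castSucc)).Adj γ' τ'' :=
              prox_pair_adj hP hγp hτ0p hγτ'
            obtain ⟨T1, T2, T3, T4, T8, T6, TE⟩ := pack' γ' τ'' hadj''
            simp only [hgm, hkk, hQQ] at T1 T2 T3 T4 T8
            have hkkL : kk P ℓ = 1 + (kk P γ'.castSucc + kk P τ''.castSucc) := by
              rw [kk_rec hP ℓ, hpair, Finset.sum_pair (fun hc => hτ0ne (by rw [hc]))]
            have hgmL : ∀ ν : Fin (m+1), gm P ν.castSucc ℓ
                = gm P ν.castSucc γ'.castSucc + gm P ν.castSucc τ''.castSucc := by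
              intro ν
              rw [gm_rec hP (Fin.castSucc_lt_last ν), hpair,
                Finset.sum_pair (fun hc => hτ0ne (by rw [hc]))]
            have hgmL2 : ∀ ν : Fin (m+1), gm P ℓ ν.castSucc
                = gm P γ'.castSucc ν.castSucc + gm P τ''.castSucc ν.castSucc := by
              intro ν
              rw [gm_symm hP ℓ ν.castSucc, hgmL ν, gm_symm hP ν.castSucc γ'.castSucc,
                gm_symm hP ν.castSucc τ''.castSucc]
            have hgmLL : gm P ℓ ℓ = 1 + gm P γ'.castSucc γ'.castSucc
                + 2 * gm P γ'.castSucc τ''.castSucc + gm P τ''.castSucc τ''.castSucc := by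
              rw [gm_diag_rec hP ℓ, hpair, Finset.sum_pair (fun hc => hτ0ne (by rw [hc])),
                hgmL γ', hgmL τ'', gm_symm hP τ''.castSucc γ'.castSucc]
              ring
            have hkτpos := kk_pos hP τ''.castSucc
            have hBpos := gm_pos hP γ'.castSucc τ''.castSucc
            have hCpos := gm_pos hP τ''.castSucc τ''.castSucc
            have hT2γ := T2 γ'
            rw [gm_symm hP τ''.castSucc γ'.castSucc] at hT2γ
            have hT2τ := T2 τ''
            have hT1τ := T1 τ''
            refine ⟨?_, ?_, ?_, ?_, ?_, ?_, ?_⟩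
            · -- S1
              intro μ
              by_cases hμℓ : μ = ℓ
              · subst hμℓ
                rw [hgmLL, hgmL γ', hkkL]
                exact zar1 hBpos hCpos T8 hT1τ
              · obtain ⟨μ', rfl⟩ : ∃ t : Fin (m+1), t.castSucc = μ :=
                  ⟨μ.castPred hμℓ, Fin.castSucc_castPred _ _⟩
                rw [hgmL2 μ', hkkL]
                have h1 := T1 μ'
                have h2 := gm_nonneg hP γ'.castSucc μ'.castSucc
                nlinarith
            · -- S2
              intro μ
              by_cases hμℓ : μ = ℓ
              · subst hμℓ
                rw [hgmLL, hgmL γ', hkkL]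
                exact le_of_lt (zar2 (by linarith) hT2γ hT2τ)
              · obtain ⟨μ', rfl⟩ : ∃ t : Fin (m+1), t.castSucc = μ :=
                  ⟨μ.castPred hμℓ, Fin.castSucc_castPred _ _⟩
                rw [hgmL2 μ', hkkL]
                have h1 := T2 μ'
                nlinarith
            · -- S3
              intro μ hQpos
              by_cases hμℓ : μ = ℓ
              · subst hμℓ
                rw [hgmLL, hgmL γ', hkkL]
                exact zar2 (by linarith) hT2γ hT2τ
              · exfalso
                obtain ⟨μ', rfl⟩ : ∃ t : Fin (m+1), t.castSucc = μ :=
                  ⟨μ.castPred hμℓ, Fin.castSucc_castPred _ _⟩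
                rw [Qlt hP _ (Fin.castSucc_lt_last μ')] at hQpos
                omega
            · -- S4
              rw [hgmL2 γ', hkkL]
              exact zar4 (by linarith) T4
            · -- S8
              rw [hgmLL, hgmL γ']
              linear_combination T8
            · -- S6
              intro hleaf μ hμγ
              have leaf' : ∀ ν', (graph (P.submatrix Fin.castSucc Fin.castSucc)).Adj γ' ν'
                  → ν' = τ'' := by
                intro ν' h'
                by_cases hb : P ℓ γ'.castSucc = -1 ∧ P ℓ ν'.castSucc = -1
                · have : ν'.castSucc ∈ proxS P ℓ := mem_prox hP hb.2
                  rw [hpair] at this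
                  simp only [Finset.mem_insert, Finset.mem_singleton] at this
                  rcases this with hc | hc
                  · exact absurd (Fin.castSucc_injective _ hc) h'.1.symm
                  · exact Fin.castSucc_injective _ hc
                · have := hleaf ν'.castSucc (adj_up hP h' hb)
                  exact absurd this (Fin.ne_last_of_lt (Fin.castSucc_lt_last ν'))
              have T6l := T6 leaf'
              by_cases hμℓ : μ = ℓ
              · subst hμℓ
                rw [hgmLL, hgmL γ', hkkL]
                have hsz := T6l τ'' hγτ'.symm
                simp only [hgm, hkk] at hsz
                exact zar1eq hCpos T8 hsz
              · obtain ⟨μ', rfl⟩ : ∃ t : Fin (m+1), t.castSucc = μ :=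
                  ⟨μ.castPred hμℓ, Fin.castSucc_castPred _ _⟩
                rw [hgmL2 μ', hkkL]
                have hμ'γ : μ' ≠ γ' := fun hc => hμγ (by rw [hc])
                have heqμ := T6l μ' hμ'γ
                simp only [hgm, hkk] at heqμ
                linear_combination heqμ
            · -- SE
              intro μ heq τ' hadjτ' hτ'η
              have hτ'γ : γ'.castSucc ≠ τ' := hadjτ'.1
              have hτ'np : ¬ P ℓ τ' = -1 := by
                intro hc
                have hmemτ' : τ' ∈ proxS P ℓ := mem_prox hP hc
                rw [hpair] at hmemτ'
                simp only [Finset.mem_insert, Finset.mem_singleton] at hmemτ'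
                rcases hmemτ' with hc' | hc'
                · exact hτ'γ hc'.symm
                · subst hc'
                  have hM0 := bothprox_M0 hP hτ'γ hγp hτ0p
                  have hM1 := hadjτ'.2
                  omega
              have hτ'l : τ' ≠ ℓ := hτ'η
              obtain ⟨τ3, rfl⟩ : ∃ t : Fin (m+1), t.castSucc = τ' :=
                ⟨τ'.castPred hτ'l, Fin.castSucc_castPred _ _⟩
              have hadjd := adj_down hP hadjτ'
              have hτ3ne : τ3 ≠ τ'' := by
                intro hc
                rw [hc] at hτ'np
                exact hτ'np hτ0p
              by_cases hμℓ : μ = ℓ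
              · subst hμℓ
                rw [hgmLL, hgmL γ', hkkL] at heq
                have hs00 := zar1rev hBpos hCpos T8 heq
                have heqτ : gm (P.submatrix Fin.castSucc Fin.castSucc) τ'' τ''
                    * (kk (P.submatrix Fin.castSucc Fin.castSucc) γ' + 1)
                    = gm (P.submatrix Fin.castSucc Fin.castSucc) γ' τ''
                    * (kk (P.submatrix Fin.castSucc Fin.castSucc) τ'' + 2) := by
                  rw [hgm, hgm, hkk, hkk]
                  linarith [hs00]
                have hres := TE τ'' heqτ τ3 hadjd hτ3ne
                rw [hQQ, hQQ] at hres
                refine ⟨?_, hres.2⟩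
                rw [Qrec hP ℓ τ3.castSucc, hpair,
                  Finset.sum_pair (fun hc => hτ0ne (by rw [hc])),
                  if_neg (fun hc => hτ'l (by rw [← hc])), hres.1, hres.2]
                ring
              · obtain ⟨μ', rfl⟩ : ∃ t : Fin (m+1), t.castSucc = μ :=
                  ⟨μ.castPred hμℓ, Fin.castSucc_castPred _ _⟩
                rw [hgmL2 μ', hkkL] at heq
                have heqμ : gm (P.submatrix Fin.castSucc Fin.castSucc) τ'' μ'
                    * (kk (P.submatrix Fin.castSucc Fin.castSucc) γ' + 1)
                    = gm (P.submatrix Fin.castSucc Fin.castSucc) γ' μ'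
                    * (kk (P.submatrix Fin.castSucc Fin.castSucc) τ'' + 2) := by
                  rw [hgm, hgm, hkk, hkk]
                  linarith [heq]
                have hres := TE μ' heqμ τ3 hadjd hτ3ne
                rw [hQQ, hQQ] at hres
                exact hres
        · -- Case I : both below ℓ
          obtain ⟨γ', rfl⟩ : ∃ t : Fin (m+1), t.castSucc = γ :=
            ⟨γ.castPred hγℓ, Fin.castSucc_castPred _ _⟩
          obtain ⟨η', rfl⟩ : ∃ t : Fin (m+1), t.castSucc = η :=
            ⟨η.castPred hηℓ, Fin.castSucc_castPred _ _⟩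
          have hadj' := adj_down hP hadj
          obtain ⟨S1', S2', S3', S4', S8', S6', SE'⟩ := pack' γ' η' hadj'
          simp only [hgm, hkk, hQQ] at S1' S2' S3' S4' S8'
          have hmem_cast : ∀ s ∈ proxS P ℓ, ∃ s' : Fin (m+1), s'.castSucc = s := by
            intro s hs
            have hlt := prox_lt hP (prox_mem hP hs)
            exact ⟨s.castPred (Fin.ne_last_of_lt hlt), Fin.castSucc_castPred _ _⟩
          have hkkℓ : kk P ℓ = 1 + ∑ s ∈ proxS P ℓ, kk P s := kk_rec hP ℓ
          have hgmℓ : ∀ ν : Fin (m+1), gm P ν.castSucc ℓ = ∑ s ∈ proxS P ℓ, gm P ν.castSucc s :=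
            fun ν => gm_rec hP (Fin.castSucc_lt_last ν)
          have hγnp : ¬ P ℓ γ'.castSucc = -1 ∨ ¬ P ℓ η'.castSucc = -1 := by
            by_contra hc
            push_neg at hc
            have h0 := bothprox_M0 hP hadj.1 hc.1 hc.2
            have := hadj.2; omega
          -- termwise bounds at s ∈ prox ℓ
          have hterm1 : ∀ s ∈ proxS P ℓ, gm P η'.castSucc s * (kk P γ'.castSucc + 1)
              ≤ gm P γ'.castSucc s * (kk P η'.castSucc + 2) := by
            intro s hs
            obtain ⟨s', rfl⟩ := hmem_cast s hs
            exact S1' s'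
          have hterm2 : ∀ s ∈ proxS P ℓ, gm P γ'.castSucc s * (kk P η'.castSucc)
              ≤ gm P η'.castSucc s * (kk P γ'.castSucc + 1) := by
            intro s hs
            obtain ⟨s', rfl⟩ := hmem_cast s hs
            exact S2' s'
          refine ⟨?_, ?_, ?_, S4', S8', ?_, ?_⟩
          · -- S1
            intro μ
            by_cases hμℓ : μ = ℓ
            · subst hμℓ
              rw [hgmℓ η', hgmℓ γ', Finset.sum_mul, Finset.sum_mul]
              exact Finset.sum_le_sum hterm1
            · obtain ⟨μ', rfl⟩ : ∃ t : Fin (m+1), t.castSucc = μ :=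
                ⟨μ.castPred hμℓ, Fin.castSucc_castPred _ _⟩
              exact S1' μ'
          · -- S2
            intro μ
            by_cases hμℓ : μ = ℓ
            · subst hμℓ
              rw [hgmℓ η', hgmℓ γ', Finset.sum_mul, Finset.sum_mul]
              exact Finset.sum_le_sum hterm2
            · obtain ⟨μ', rfl⟩ : ∃ t : Fin (m+1), t.castSucc = μ :=
                ⟨μ.castPred hμℓ, Fin.castSucc_castPred _ _⟩
              exact S2' μ'
          · -- S3
            intro μ hQpos
            by_cases hμℓ : μ = ℓ
            · subst hμℓ
              have hQr := Qrec hP ℓ η'.castSucc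
              rw [if_neg (by exact fun hc => hηℓ (by rw [← hc]))] at hQr
              have hex : ∃ s ∈ proxS P ℓ, 0 < P⁻¹ s η'.castSucc := by
                by_contra hc
                push_neg at hc
                have hz : ∑ s ∈ proxS P ℓ, P⁻¹ s η'.castSucc = 0 :=
                  le_antisymm (Finset.sum_nonpos hc)
                    (Finset.sum_nonneg fun s _ => Qnonneg hP s _)
                rw [hQr, hz] at hQpos; omega
              obtain ⟨s0, hs0, hs0pos⟩ := hex
              rw [hgmℓ η', hgmℓ γ', Finset.sum_mul, Finset.sum_mul]
              refine Finset.sum_lt_sum hterm2 ⟨s0, hs0, ?_⟩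
              obtain ⟨s', rfl⟩ := hmem_cast s0 hs0
              exact S3' s' hs0pos
            · obtain ⟨μ', rfl⟩ : ∃ t : Fin (m+1), t.castSucc = μ :=
                ⟨μ.castPred hμℓ, Fin.castSucc_castPred _ _⟩
              exact S3' μ' hQpos
          · -- S6
            intro hleaf μ hμγ
            have hγp : ¬ P ℓ γ'.castSucc = -1 := by
              intro h
              exact hηℓ ((hleaf ℓ ((adj_last hP).mpr h)).symm)
            have leaf' : ∀ ν', (graph (P.submatrix Fin.castSucc Fin.castSucc)).Adj γ' ν'
                → ν' = η' := by
              intro ν' h'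
              by_cases hb : P ℓ γ'.castSucc = -1 ∧ P ℓ ν'.castSucc = -1
              · exact absurd hb.1 hγp
              · exact Fin.castSucc_injective _ (hleaf ν'.castSucc (adj_up hP h' hb))
            have S6l := S6' leaf'
            by_cases hμℓ : μ = ℓ
            · subst hμℓ
              rw [hgmℓ η', hgmℓ γ', Finset.sum_mul, Finset.sum_mul]
              refine Finset.sum_congr rfl (fun s hs => ?_)
              obtain ⟨s', rfl⟩ := hmem_cast s hs
              have hsγ : s' ≠ γ' := by
                intro hc; subst hc
                exact hγp (prox_mem hP hs)
              have := S6l s' hsγ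
              simp only [hgm, hkk] at this
              exact this
            · obtain ⟨μ', rfl⟩ : ∃ t : Fin (m+1), t.castSucc = μ :=
                ⟨μ.castPred hμℓ, Fin.castSucc_castPred _ _⟩
              have hμγ' : μ' ≠ γ' := fun hc => hμγ (by rw [hc])
              have := S6l μ' hμγ'
              simp only [hgm, hkk] at this
              exact this
          · -- SE
            intro μ heq τ' hτ'adj hτ'η
            by_cases hτ'ℓ : τ' = ℓ
            · subst hτ'ℓ
              have hγpp : P ℓ γ'.castSucc = -1 := (adj_last hP).mp hτ'adj
              by_cases hμℓ : μ = ℓ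
              · exfalso
                subst hμℓ
                rw [hgmℓ η', hgmℓ γ'] at heq
                have hlt : ∑ s ∈ proxS P ℓ, gm P η'.castSucc s * (kk P γ'.castSucc + 1)
                    < ∑ s ∈ proxS P ℓ, gm P γ'.castSucc s * (kk P η'.castSucc + 2) :=
                  Finset.sum_lt_sum hterm1 ⟨γ'.castSucc, mem_prox hP hγpp, S4'⟩
                rw [← Finset.sum_mul, ← Finset.sum_mul, heq] at hlt
                exact lt_irrefl _ hlt
              · obtain ⟨μ', rfl⟩ : ∃ t : Fin (m+1), t.castSucc = μ :=
                  ⟨μ.castPred hμℓ, Fin.castSucc_castPred _ _⟩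
                exact ⟨Qlt hP _ (Fin.castSucc_lt_last μ'), Qlt hP _ (Fin.castSucc_lt_last γ')⟩
            · obtain ⟨τ'', rfl⟩ : ∃ t : Fin (m+1), t.castSucc = τ' :=
                ⟨τ'.castPred hτ'ℓ, Fin.castSucc_castPred _ _⟩
              have hadjτ' := adj_down hP hτ'adj
              have hτ''η : τ'' ≠ η' := fun hc => hτ'η (by rw [hc])
              by_cases hμℓ : μ = ℓ
              · subst hμℓ
                rw [hgmℓ η', hgmℓ γ'] at heq
                have hall : ∀ s ∈ proxS P ℓ, gm P η'.castSucc s * (kk P γ'.castSucc + 1)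
                    = gm P γ'.castSucc s * (kk P η'.castSucc + 2) := by
                  by_contra hc
                  push_neg at hc
                  obtain ⟨s0, hs0, hs0ne⟩ := hc
                  have hlt : ∑ s ∈ proxS P ℓ, gm P η'.castSucc s * (kk P γ'.castSucc + 1)
                      < ∑ s ∈ proxS P ℓ, gm P γ'.castSucc s * (kk P η'.castSucc + 2) :=
                    Finset.sum_lt_sum hterm1
                      ⟨s0, hs0, lt_of_le_of_ne (hterm1 s0 hs0) hs0ne⟩
                  rw [← Finset.sum_mul, ← Finset.sum_mul, heq] at hlt
                  exact lt_irrefl _ hlt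
                have hQμ : P⁻¹ ℓ τ''.castSucc = 0 := by
                  rw [Qrec hP ℓ τ''.castSucc,
                    if_neg (fun hc => hτ'ℓ (by rw [← hc]))]
                  rw [Finset.sum_eq_zero, zero_add]
                  intro s hs
                  obtain ⟨s', rfl⟩ := hmem_cast s hs
                  have heqs := hall s'.castSucc hs
                  have heq' : gm (P.submatrix Fin.castSucc Fin.castSucc) η' s'
                      * (kk (P.submatrix Fin.castSucc Fin.castSucc) γ' + 1)
                      = gm (P.submatrix Fin.castSucc Fin.castSucc) γ' s'
                      * (kk (P.submatrix Fin.castSucc Fin.castSucc) η' + 2) := by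
                    rw [hgm, hgm, hkk, hkk]
                    exact heqs
                  have := (SE' s' heq' τ'' hadjτ' hτ''η).1
                  rw [hQQ] at this
                  exact this
                have hQγ : P⁻¹ γ'.castSucc τ''.castSucc = 0 := by
                  obtain ⟨s0, hs0⟩ := hne0
                  obtain ⟨s', rfl⟩ := hmem_cast s0 hs0
                  have heqs := hall s'.castSucc hs0
                  have heq' : gm (P.submatrix Fin.castSucc Fin.castSucc) η' s'
                      * (kk (P.submatrix Fin.castSucc Fin.castSucc) γ' + 1)
                      = gm (P.submatrix Fin.castSucc Fin.castSucc) γ' s'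
                      * (kk (P.submatrix Fin.castSucc Fin.castSucc) η' + 2) := by
                    rw [hgm, hgm, hkk, hkk]
                    exact heqs
                  have := (SE' s' heq' τ'' hadjτ' hτ''η).2
                  rw [hQQ] at this
                  exact this
                exact ⟨hQμ, hQγ⟩
              · obtain ⟨μ', rfl⟩ : ∃ t : Fin (m+1), t.castSucc = μ :=
                  ⟨μ.castPred hμℓ, Fin.castSucc_castPred _ _⟩
                have heq' : gm (P.submatrix Fin.castSucc Fin.castSucc) η' μ'
                    * (kk (P.submatrix Fin.castSucc Fin.castSucc) γ' + 1)
                    = gm (P.submatrix Fin.castSucc Fin.castSucc) γ' μ'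
                    * (kk (P.submatrix Fin.castSucc Fin.castSucc) η' + 2) := by
                  rw [hgm, hgm, hkk, hkk]; exact heq
                have h12 := SE' μ' heq' τ'' hadjτ' hτ''η
                rw [hQQ, hQQ] at h12
                exact h12


section Final
variable {N : ℕ} {P : Matrix (Fin N) (Fin N) ℤ} (hP : IsProximityMatrix P)
include hP

lemma dd_expand (dh : Fin N → ℤ) (ν : Fin N) :
    dd P dh ν = ∑ μ, dh μ * gm P ν μ := by
  unfold dd dstar gm
  simp only [Finset.sum_mul]
  rw [Finset.sum_comm]
  refine Finset.sum_congr rfl fun μ _ => ?_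
  rw [Finset.mul_sum]
  refine Finset.sum_congr rfl fun ρ _ => by ring

lemma exists_pos (dh : Fin N → ℤ) (hdh : ∀ ν, 0 ≤ dh ν)
    (hds : ∀ ν, 0 < dstar P dh ν) (ν : Fin N) :
    ∃ μ, 0 < dh μ ∧ 0 < P⁻¹ μ ν := by
  have h := hds ν
  unfold dstar at h
  by_contra hc
  push_neg at hc
  have hz : ∑ μ, dh μ * P⁻¹ μ ν = 0 := by
    refine Finset.sum_eq_zero fun μ _ => ?_
    rcases (hdh μ).lt_or_eq with hlt | heq
    · have := hc μ hlt
      have h2 := Qnonneg hP μ ν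
      have : P⁻¹ μ ν = 0 := le_antisymm this h2
      rw [this, mul_zero]
    · rw [← heq, zero_mul]
  rw [hz] at h
  omega

lemma dd_pos (dh : Fin N → ℤ) (hdh : ∀ ν, 0 ≤ dh ν)
    (hds : ∀ ν, 0 < dstar P dh ν) (ν : Fin N) : 0 < dd P dh ν := by
  rw [dd_expand hP dh ν]
  obtain ⟨μ0, h1, h2⟩ := exists_pos hP dh hdh hds ν
  have hpos : (0:ℤ) < dh μ0 * gm P ν μ0 :=
    mul_pos h1 (lt_of_lt_of_le one_pos (gm_pos hP ν μ0))
  exact lt_of_lt_of_le hpos (Finset.single_le_sum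
    (fun μ _ => mul_nonneg (hdh μ) (gm_nonneg hP ν μ)) (Finset.mem_univ μ0))

end Final

end ProxAux

open ProxAux

/-- Lemma 3.3 a): for adjacent `γ, η`, `|α(γ,η)| < 1` unless `d̂_γ = 0` and `η` is the
only vertex adjacent to `γ`, in which case `α(γ,η) = −1`. -/
theorem statement_9 {N : ℕ} (P : Matrix (Fin N) (Fin N) ℤ)
    (hP : IsProximityMatrix P)
    (dh : Fin N → ℤ) (hdh : ∀ ν, 0 ≤ dh ν) (hds : ∀ ν, 0 < dstar P dh ν)
    (γ η : Fin N) (hadj : (graph P).Adj γ η) :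
    (¬(dh γ = 0 ∧ ∀ ν, (graph P).Adj γ ν → ν = η) → |alpha P dh γ η| < 1) ∧
    ((dh γ = 0 ∧ ∀ ν, (graph P).Adj γ ν → ν = η) → alpha P dh γ η = -1) := by
  obtain ⟨pack, -⟩ := master N P hP
  obtain ⟨S1, S2, S3, S4, S8, S6, SE⟩ := pack γ η hadj
  have hddγ := dd_pos hP dh hdh hds γ
  have hQd : (0:ℚ) < ((dd P dh γ : ℤ) : ℚ) := by exact_mod_cast hddγ
  -- upper strict bound (always)
  have hU : dd P dh γ * kk P η < dd P dh η * (kk P γ + 1) := by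
    rw [dd_expand hP dh γ, dd_expand hP dh η, Finset.sum_mul, Finset.sum_mul]
    obtain ⟨μ0, h1, h2⟩ := exists_pos hP dh hdh hds η
    refine Finset.sum_lt_sum (fun μ _ => ?_) ⟨μ0, Finset.mem_univ μ0, ?_⟩
    · simpa [mul_assoc] using mul_le_mul_of_nonneg_left (S2 μ) (hdh μ)
    · simpa [mul_assoc] using mul_lt_mul_of_pos_left (S3 μ0 h2) h1
  -- lower bound
  have hLw : ∀ μ : Fin N, dh μ * gm P η μ * (kk P γ + 1)
      ≤ dh μ * gm P γ μ * (kk P η + 2) := fun μ => by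
    simpa [mul_assoc] using mul_le_mul_of_nonneg_left (S1 μ) (hdh μ)
  constructor
  · intro hnot
    have hL : dd P dh η * (kk P γ + 1) < dd P dh γ * (kk P η + 2) := by
      rw [dd_expand hP dh γ, dd_expand hP dh η, Finset.sum_mul, Finset.sum_mul]
      by_cases hd : dh γ = 0
      · have hnleaf : ¬ (∀ ν, (graph P).Adj γ ν → ν = η) := fun hc => hnot ⟨hd, hc⟩
        push_neg at hnleaf
        obtain ⟨τ, hτadj, hτne⟩ := hnleaf
        obtain ⟨μ0, h1, h2⟩ := exists_pos hP dh hdh hds τ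
        refine Finset.sum_lt_sum (fun μ _ => hLw μ) ⟨μ0, Finset.mem_univ μ0, ?_⟩
        have hstrict : gm P η μ0 * (kk P γ + 1) < gm P γ μ0 * (kk P η + 2) := by
          rcases (S1 μ0).lt_or_eq with hlt | heq
          · exact hlt
          · exact absurd (SE μ0 heq τ hτadj hτne).1 (by omega)
        simpa [mul_assoc] using mul_lt_mul_of_pos_left hstrict h1
      · have h1 : 0 < dh γ := lt_of_le_of_ne (hdh γ) (Ne.symm hd)
        refine Finset.sum_lt_sum (fun μ _ => hLw μ) ⟨γ, Finset.mem_univ γ, ?_⟩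
        simpa [mul_assoc] using mul_lt_mul_of_pos_left S4 h1
    rw [abs_lt]
    constructor
    · have hL' : ((dd P dh η : ℤ):ℚ) * (((kk P γ : ℤ):ℚ) + 1)
          < ((dd P dh γ : ℤ):ℚ) * (((kk P η : ℤ):ℚ) + 2) := by exact_mod_cast hL
      unfold alpha
      have hdiv : ((dd P dh η : ℤ):ℚ) * (((kk P γ : ℤ):ℚ) + 1) / ((dd P dh γ : ℤ):ℚ)
          < ((kk P η : ℤ):ℚ) + 2 := by
        rw [div_lt_iff₀ hQd]
        nlinarith [hL']
      linarith
    · have hU' : ((dd P dh γ : ℤ):ℚ) * ((kk P η : ℤ):ℚ)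
          < ((dd P dh η : ℤ):ℚ) * (((kk P γ : ℤ):ℚ) + 1) := by exact_mod_cast hU
      unfold alpha
      have hdiv : ((kk P η : ℤ):ℚ)
          < ((dd P dh η : ℤ):ℚ) * (((kk P γ : ℤ):ℚ) + 1) / ((dd P dh γ : ℤ):ℚ) := by
        rw [lt_div_iff₀ hQd]
        nlinarith [hU']
      linarith
  · rintro ⟨hd, hleaf⟩
    have hEq : dd P dh η * (kk P γ + 1) = dd P dh γ * (kk P η + 2) := by
      rw [dd_expand hP dh γ, dd_expand hP dh η, Finset.sum_mul, Finset.sum_mul]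
      refine Finset.sum_congr rfl fun μ _ => ?_
      by_cases hμγ : μ = γ
      · subst hμγ; rw [hd]; ring
      · rw [mul_assoc, mul_assoc, S6 hleaf μ hμγ]
    have hEq' : ((dd P dh η : ℤ):ℚ) * (((kk P γ : ℤ):ℚ) + 1)
        = ((dd P dh γ : ℤ):ℚ) * (((kk P η : ℤ):ℚ) + 2) := by exact_mod_cast hEq
    have hdiv : ((dd P dh η : ℤ):ℚ) * (((kk P γ : ℤ):ℚ) + 1) / ((dd P dh γ : ℤ):ℚ)
        = ((kk P η : ℤ):ℚ) + 2 := by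
      rw [div_eq_iff (ne_of_gt hQd)]
      nlinarith [hEq']
    unfold alpha
    linarith
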